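/- A single-decision causal influence diagram admits an instrumental control incentive on a node X if and only if the graph contains a directed path from the decision D through X to some utility node. -/

import Mathlib

attribute [local instance] Classical.propDecidable

noncomputable section

/-- Acyclicity of a directed graph. -/
def Acyclic {V : Type} (E : V → V → Prop) : Prop := ∀ v, ¬ Relation.TransGen E v v

/-- A walk in the digraph: a nonempty list of vertices where consecutive
vertices are joined by an edge in some direction. -/
def IsWalk {V : Type} (E : V → V → Prop) (p : List V) : Prop :=
  p ≠ [] ∧ p.Chain' (fun a b => E a b ∨ E b a)

/-- A consecutive triple `a, b, c` blocks a path w.r.t. `S` if `b` is a collider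
with no descendant (including itself) in `S`, or a non-collider in `S`. -/
def BlockedTriple {V : Type} (E : V → V → Prop) (S : Set V) (a b c : V) : Prop :=
  (E a b ∧ E c b ∧ ∀ w, Relation.ReflTransGen E b w → w ∉ S) ∨
  (¬ (E a b ∧ E c b) ∧ b ∈ S)

/-- A path is d-separated (blocked) by `S`. -/
def BlocksPath {V : Type} (E : V → V → Prop) (S : Set V) (p : List V) : Prop :=
  (∃ x, p.head? = some x ∧ x ∈ S) ∨ (∃ x, p.getLast? = some x ∧ x ∈ S) ∨
  (∃ l a b c r, p = l ++ a :: b :: c :: r ∧ BlockedTriple E S a b c)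

/-- `A` is d-separated from `B` given `S`. -/
def DSep {V : Type} (E : V → V → Prop) (A B S : Set V) : Prop :=
  ∀ p : List V, IsWalk E p → (∃ a ∈ A, p.head? = some a) →
    (∃ b ∈ B, p.getLast? = some b) → BlocksPath E S p

/-- An observation `X ∈ Pa_D` is requisite in the graph `E` with decision `D` and
utility nodes `U` if it is d-connected to the downstream utilities `U ∩ Desc(D)`
given the other observations and the decision, `(Pa_D ∪ {D}) \ {X}`. -/
def RequisiteG {V : Type} (E : V → V → Prop) (D : V) (U : Set V) (X : V) : Prop :=
  E X D ∧ ¬ DSep E {X} {u | u ∈ U ∧ Relation.ReflTransGen E D u}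
      {v | (E v D ∧ v ≠ X) ∨ v = D}

/-- The edge relation of the minimal reduction: all information links from
nonrequisite observations are removed. -/
def ReducedEdge {V : Type} (E : V → V → Prop) (D : V) (U : Set V) : V → V → Prop :=
  fun a b => E a b ∧ (b = D → RequisiteG E D U a)

variable {V : Type} [Fintype V] [DecidableEq V]

/-- A single-decision structural causal influence model (SCIM): a causal
influence diagram (DAG with a decision node `D` and childless utility nodes
`Util` whose values are interpreted in `ℝ` via `utilReal`), finite nonempty
domains, structural functions for all non-decision nodes depending only on
parents, and mutually independent finitely-supported exogenous variables. -/
structure SCIM (V : Type) [Fintype V] [DecidableEq V] where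
  Edge : V → V → Prop
  acyclic : Acyclic Edge
  D : V
  Util : Finset V
  utilNotD : D ∉ Util
  utilNoChild : ∀ u ∈ Util, ∀ v, ¬ Edge u v
  Dom : V → Type
  domFin : ∀ v, Fintype (Dom v)
  domNE : ∀ v, Nonempty (Dom v)
  utilReal : (u : V) → Dom u → ℝ
  ExoDom : V → Type
  exoFin : ∀ v, Fintype (ExoDom v)
  exoNE : ∀ v, Nonempty (ExoDom v)
  f : (v : V) → ((p : V) → Dom p) → ExoDom v → Dom v
  localDep : ∀ v a a' e, (∀ p, Edge p v → a p = a' p) → f v a e = f v a' e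
  P : (v : V) → ExoDom v → ℝ
  Pnonneg : ∀ v e, 0 ≤ P v e
  Psum : ∀ v, ∑ e ∈ (exoFin v).elems, P v e = 1

namespace SCIM

variable (M : SCIM V)

/-- Joint (product) probability of an exogenous setting. -/
def Pjoint (ε : ∀ v, M.ExoDom v) : ℝ := ∏ v, M.P v (ε v)

/-- All exogenous settings. -/
def exoElems : Finset (∀ v, M.ExoDom v) :=
  letI := M.exoFin; Finset.univ

/-- A default assignment of values. -/
def dflt : ∀ v, M.Dom v := fun v => (M.domNE v).some

/-- `a` solves the system of structural equations `g` at exogenous setting `ε`. -/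
def Solves (g : (v : V) → ((p : V) → M.Dom p) → M.ExoDom v → M.Dom v)
    (ε : ∀ v, M.ExoDom v) (a : ∀ v, M.Dom v) : Prop :=
  ∀ v, a v = g v a (ε v)

/-- The (unique, by acyclicity) solution of the structural equations `g`
at `ε`: the values of all endogenous variables obtained by recursive
application of the structural functions. -/
def sol (g : (v : V) → ((p : V) → M.Dom p) → M.ExoDom v → M.Dom v)
    (ε : ∀ v, M.ExoDom v) : ∀ v, M.Dom v :=
  if h : ∃ a, M.Solves g ε a then h.choose else M.dflt

/-- Replace the structural function at node `X` by `gX` (a soft intervention). -/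
def replaceAt (g : (v : V) → ((p : V) → M.Dom p) → M.ExoDom v → M.Dom v) (X : V)
    (gX : ((p : V) → M.Dom p) → M.ExoDom X → M.Dom X) :
    (v : V) → ((p : V) → M.Dom p) → M.ExoDom v → M.Dom v :=
  fun v => if h : v = X then (by subst h; exact gX) else g v

/-- Hard intervention do(`X` = `x`): constant functions on `X`. -/
def doSet (g : (v : V) → ((p : V) → M.Dom p) → M.ExoDom v → M.Dom v)
    (X : Set V) (x : ∀ v, M.Dom v) :
    (v : V) → ((p : V) → M.Dom p) → M.ExoDom v → M.Dom v :=
  fun v => if v ∈ X then fun _ _ => x v else g v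

/-- A policy: a structural function for `D` that depends only on the
observations `Pa_D` (and the exogenous variable of `D`). -/
def IsPolicy (π : ((p : V) → M.Dom p) → M.ExoDom M.D → M.Dom M.D) : Prop :=
  ∀ a a' e, (∀ p, M.Edge p M.D → a p = a' p) → π a e = π a' e

/-- The policy-completed system of structural functions. -/
def gpol (π : ((p : V) → M.Dom p) → M.ExoDom M.D → M.Dom M.D) :
    (v : V) → ((p : V) → M.Dom p) → M.ExoDom v → M.Dom v :=
  M.replaceAt M.f M.D π

/-- Total utility of an assignment: the sum of the utility-node values. -/
def TotalU (a : ∀ v, M.Dom v) : ℝ := ∑ u ∈ M.Util, M.utilReal u (a u)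

/-- Expected total utility of a system of structural equations `g`. -/
def EUg (g : (v : V) → ((p : V) → M.Dom p) → M.ExoDom v → M.Dom v) : ℝ :=
  ∑ ε ∈ M.exoElems, M.Pjoint ε * M.TotalU (M.sol g ε)

/-- Expected total utility of a policy. -/
def EU (π : ((p : V) → M.Dom p) → M.ExoDom M.D → M.Dom M.D) : ℝ :=
  M.EUg (M.gpol π)

/-- An optimal policy maximizes expected total utility. -/
def IsOptimal (π : ((p : V) → M.Dom p) → M.ExoDom M.D → M.Dom M.D) : Prop :=
  M.IsPolicy π ∧ ∀ π', M.IsPolicy π' → M.EU π' ≤ M.EU π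

/-- Probability of an event over exogenous settings. -/
def PrEv (Ev : (∀ v, M.ExoDom v) → Prop) : ℝ :=
  ∑ ε ∈ M.exoElems, if Ev ε then M.Pjoint ε else 0

/-- Conditional expectation of `h` given the event `Ev`. -/
def condExp (h : (∀ v, M.ExoDom v) → ℝ) (Ev : (∀ v, M.ExoDom v) → Prop) : ℝ :=
  (∑ ε ∈ M.exoElems, if Ev ε then M.Pjoint ε * h ε else 0) / M.PrEv Ev

/-- Conditional probability of `h` given `Ev`. -/
def condProb (h Ev : (∀ v, M.ExoDom v) → Prop) : ℝ :=
  M.PrEv (fun ε => h ε ∧ Ev ε) / M.PrEv Ev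

/-- The event that the decision context (the observations `Pa_D`) takes the
values `pa`, under policy `π`. -/
def CtxEvent (π : ((p : V) → M.Dom p) → M.ExoDom M.D → M.Dom M.D)
    (pa : ∀ v, M.Dom v) (ε : ∀ v, M.ExoDom v) : Prop :=
  ∀ p, M.Edge p M.D → M.sol (M.gpol π) ε p = pa p

/-- The potential response under the hard intervention do(`X` = `x`),
in the policy-completed model: an assignment to all variables. -/
def response (π : ((p : V) → M.Dom p) → M.ExoDom M.D → M.Dom M.D)
    (X : V) (x : M.Dom X) (ε : ∀ v, M.ExoDom v) : ∀ v, M.Dom v :=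
  M.sol (M.doSet (M.gpol π) {X} (Function.update M.dflt X x)) ε

/-- The nested-counterfactual assignment realizing `U_{X_d}`: intervene on `X`
with the value `X_d(ε)` it would take under do(`D` = `d`). -/
def nestedSol (π : ((p : V) → M.Dom p) → M.ExoDom M.D → M.Dom M.D)
    (X : V) (d : M.Dom M.D) (ε : ∀ v, M.ExoDom v) : ∀ v, M.Dom v :=
  M.response π X (M.response π M.D d ε X) ε

/-- Instrumental control incentive on `X`: in some decision context `pa`
(of positive probability), every optimal policy has
`E[U_{X_d} | pa] ≠ E[U | pa]` for some `d`. -/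
def HasICI (X : V) : Prop :=
  ∃ pa : ∀ v, M.Dom v, ∀ π, M.IsOptimal π →
    0 < M.PrEv (M.CtxEvent π pa) ∧
    ∃ d : M.Dom M.D,
      M.condExp (fun ε => M.TotalU (M.nestedSol π X d ε)) (M.CtxEvent π pa) ≠
      M.condExp (fun ε => M.TotalU (M.sol (M.gpol π) ε)) (M.CtxEvent π pa)

/-- A policy that does not use the information link `X → D`. -/
def IsPolicyWithout (X : V)
    (π : ((p : V) → M.Dom p) → M.ExoDom M.D → M.Dom M.D) : Prop :=
  M.IsPolicy π ∧ ∀ a a' e, (∀ p, M.Edge p M.D → p ≠ X → a p = a' p) → π a e = π a' e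

/-- Counterfactual fairness of policy `π` w.r.t. sensitive attribute `A`:
`Pr(D_{a'} = d | pa_D, a) = Pr(D = d | pa_D, a)` for all `d`, contexts `pa_D`,
and attribute values `a, a'` with positive probability of the conditioning event. -/
def CFair (π : ((p : V) → M.Dom p) → M.ExoDom M.D → M.Dom M.D) (A : V) : Prop :=
  ∀ (d : M.Dom M.D) (pa : ∀ v, M.Dom v) (a a' : M.Dom A),
    0 < M.PrEv (fun ε => M.CtxEvent π pa ε ∧ M.sol (M.gpol π) ε A = a) →
    M.condProb (fun ε => M.response π A a' ε M.D = d)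
        (fun ε => M.CtxEvent π pa ε ∧ M.sol (M.gpol π) ε A = a) =
    M.condProb (fun ε => M.sol (M.gpol π) ε M.D = d)
        (fun ε => M.CtxEvent π pa ε ∧ M.sol (M.gpol π) ε A = a)

end SCIM

/-!
If `X` is not downstream of `D`, intervening on `D` does not move `X`, so the nested
counterfactual `U_{X_d}` is just `U`; if no utility node is downstream of `X`, intervening
on `X` does not move any utility, and again `U_{X_d} = U`.

Conversely, given paths `D ⇝ X ⇝ u` with `u` a utility node, let every node compute the
conjunction of its parents (with a single exogenous setting) and let only `u` pay, `1` when
true. The policy `D = true` makes every node true, so an optimal policy makes `u` true;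
`d = false` propagates along `D ⇝ X` and then along `X ⇝ u`, so `U_{X_false} = 0 ≠ 1 = U`.
-/

open Relation

namespace Acyclic

variable {α : Type} {r : α → α → Prop}

lemma wellFounded_transGen [Finite α] (h : Acyclic r) : WellFounded (TransGen r) :=
  haveI : Std.Irrefl (TransGen r) := ⟨h⟩
  Finite.wellFounded_of_trans_of_irrefl _

lemma not_transGen_of_reflTransGen (h : Acyclic r) {a b : α} (hab : ReflTransGen r a b) :
    ¬ TransGen r b a :=
  fun hba => h b (hba.trans_left hab)

end Acyclic

section Conjunction

variable {α : Type} {r : α → α → Prop} {s : α → Prop}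

lemma holds_of_eq_forall_parents (hwf : WellFounded (TransGen r)) {T : Set α}
    (hs : ∀ v ∉ T, s v = ∀ p, r p v → s p) (v : α)
    (hT : ∀ t ∈ T, ReflTransGen r t v → s t) : s v := by
  induction v using hwf.induction with
  | _ v ih =>
    by_cases hv : v ∈ T
    · exact hT v hv .refl
    · rw [hs v hv]
      exact fun p hp => ih p (.single hp) fun t ht htp => hT t ht (htp.tail hp)

lemma not_of_eq_forall_parents {x v : α} (hx : ¬ s x) (hxv : ReflTransGen r x v)
    (hs : ∀ w, TransGen r x w → s w = ∀ p, r p w → s p) : ¬ s v := by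
  induction hxv with
  | refl => exact hx
  | tail hxw hwv ih =>
    rw [hs _ (TransGen.tail' hxw hwv)]
    exact fun h => ih (h _ hwv)

end Conjunction

namespace SCIM

variable (M : SCIM V)

abbrev Policy : Type := ((p : V) → M.Dom p) → M.ExoDom M.D → M.Dom M.D

def IsLocal (g : (v : V) → ((p : V) → M.Dom p) → M.ExoDom v → M.Dom v) : Prop :=
  ∀ v a a' e, (∀ p, M.Edge p v → a p = a' p) → g v a e = g v a' e

lemma mem_exoElems (ε : ∀ v, M.ExoDom v) : ε ∈ M.exoElems := by
  let := M.exoFin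
  exact Finset.mem_univ ε

lemma exists_isOptimal : ∃ π, M.IsOptimal π := by
  have := M.domFin
  have := M.exoFin
  have hne : {π | M.IsPolicy π}.Nonempty := ⟨fun _ _ => M.dflt M.D, fun _ _ _ _ => rfl⟩
  obtain ⟨π, hπ, hmax⟩ := Set.exists_max_image _ M.EU (Set.toFinite _) hne
  exact ⟨π, hπ, hmax⟩

variable {M}

section Solutions

variable {g g' : (v : V) → ((p : V) → M.Dom p) → M.ExoDom v → M.Dom v}

lemma exists_solves (hg : M.IsLocal g) (ε : ∀ v, M.ExoDom v) : ∃ a, M.Solves g ε a := by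
  let a : ∀ v, M.Dom v := M.acyclic.wellFounded_transGen.fix fun v rec =>
    g v (fun p => if h : TransGen M.Edge p v then rec p h else M.dflt p) (ε v)
  refine ⟨a, fun v => ?_⟩
  rw [show a v = _ from WellFounded.fix_eq _ _ v]
  exact hg v _ _ _ fun p hp => dif_pos (.single hp)

lemma solves_unique (hg : M.IsLocal g) {ε : ∀ v, M.ExoDom v} {a a' : ∀ v, M.Dom v}
    (h : M.Solves g ε a) (h' : M.Solves g ε a') : a = a' := by
  funext v
  induction v using M.acyclic.wellFounded_transGen.induction with
  | _ v ih =>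
    rw [h v, h' v]
    exact hg v _ _ _ fun p hp => ih p (.single hp)

lemma sol_solves (hg : M.IsLocal g) (ε : ∀ v, M.ExoDom v) : M.Solves g ε (M.sol g ε) := by
  have h := exists_solves hg ε
  rw [SCIM.sol, dif_pos h]
  exact h.choose_spec

lemma sol_eq (hg : M.IsLocal g) {ε : ∀ v, M.ExoDom v} {a : ∀ v, M.Dom v}
    (ha : M.Solves g ε a) : M.sol g ε = a :=
  solves_unique hg (sol_solves hg ε) ha

lemma sol_eq_of_not_reflTransGen (hg : M.IsLocal g) (hg' : M.IsLocal g') {X : V}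
    (hgg' : ∀ v, ¬ ReflTransGen M.Edge X v → g v = g' v) (ε : ∀ v, M.ExoDom v) (v : V)
    (hv : ¬ ReflTransGen M.Edge X v) : M.sol g ε v = M.sol g' ε v := by
  induction v using M.acyclic.wellFounded_transGen.induction with
  | _ v ih =>
    rw [sol_solves hg ε v, sol_solves hg' ε v, hgg' v hv]
    exact hg' v _ _ _ fun p hp => ih p (.single hp) fun hXp => hv (hXp.tail hp)

lemma doSet_of_mem {S : Set V} {x : ∀ v, M.Dom v} {v : V} (h : v ∈ S) :
    M.doSet g S x v = fun _ _ => x v :=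
  if_pos h

lemma doSet_of_not_mem {S : Set V} {x : ∀ v, M.Dom v} {v : V} (h : v ∉ S) :
    M.doSet g S x v = g v :=
  if_neg h

lemma IsLocal.doSet (hg : M.IsLocal g) (S : Set V) (x : ∀ v, M.Dom v) :
    M.IsLocal (M.doSet g S x) := by
  intro v a a' e hpar
  by_cases h : v ∈ S
  · simp only [doSet_of_mem h]
  · simp only [doSet_of_not_mem h]
    exact hg v a a' e hpar

lemma sol_doSet_sol (hg : M.IsLocal g) (X : V) (ε : ∀ v, M.ExoDom v) :
    M.sol (M.doSet g {X} (Function.update M.dflt X (M.sol g ε X))) ε = M.sol g ε := by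
  refine sol_eq (hg.doSet _ _) fun v => ?_
  by_cases h : v = X
  · subst h
    simp [doSet_of_mem]
  · rw [doSet_of_not_mem (show v ∉ ({X} : Set V) from h)]
    exact sol_solves hg ε v

lemma sol_apply_of_eq_f (hg : M.IsLocal g) (ε : ∀ v, M.ExoDom v) {v : V} (hv : g v = M.f v) :
    M.sol g ε v = M.f v (M.sol g ε) (ε v) := by
  rw [sol_solves hg ε v, hv]

end Solutions

section Policies

variable {π : M.Policy}

lemma gpol_self : M.gpol π M.D = π := by
  simp [gpol, replaceAt]

lemma gpol_of_ne {v : V} (h : v ≠ M.D) : M.gpol π v = M.f v := by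
  simp [gpol, replaceAt, h]

lemma IsPolicy.isLocal_gpol (hπ : M.IsPolicy π) : M.IsLocal (M.gpol π) := by
  intro v a a' e hpar
  by_cases h : v = M.D
  · subst h
    rw [gpol_self]
    exact hπ a a' e hpar
  · rw [gpol_of_ne h]
    exact M.localDep v a a' e hpar

lemma response_eq_sol_of_not_reflTransGen (hπ : M.IsPolicy π) {X : V} (x : M.Dom X)
    (ε : ∀ v, M.ExoDom v) {v : V} (hv : ¬ ReflTransGen M.Edge X v) :
    M.response π X x ε v = M.sol (M.gpol π) ε v :=
  sol_eq_of_not_reflTransGen (hπ.isLocal_gpol.doSet _ _) hπ.isLocal_gpol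
    (fun _ hw => doSet_of_not_mem fun hwX => hw (hwX ▸ .refl)) ε v hv

lemma response_sol (hπ : M.IsPolicy π) (X : V) (ε : ∀ v, M.ExoDom v) :
    M.response π X (M.sol (M.gpol π) ε X) ε = M.sol (M.gpol π) ε :=
  sol_doSet_sol hπ.isLocal_gpol X ε

end Policies

lemma HasICI.reflTransGen {X : V} (h : M.HasICI X) :
    ReflTransGen M.Edge M.D X ∧ ∃ u ∈ M.Util, ReflTransGen M.Edge X u := by
  obtain ⟨pa, hpa⟩ := h
  obtain ⟨π, hπ⟩ := M.exists_isOptimal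
  obtain ⟨-, d, hne⟩ := hpa π hπ
  constructor
  · by_contra hDX
    refine hne (congrArg₂ _ (funext fun ε => ?_) rfl)
    rw [nestedSol, response_eq_sol_of_not_reflTransGen hπ.1 _ _ hDX, response_sol hπ.1]
  · by_contra! hXu
    refine hne (congrArg₂ _ (funext fun ε => Finset.sum_congr rfl fun u hu => ?_) rfl)
    rw [nestedSol, response_eq_sol_of_not_reflTransGen hπ.1 _ _ (hXu u hu)]

end SCIM

def conjunctionModel (E : V → V → Prop) (hac : Acyclic E) (D : V) (Util : Finset V)
    (hD : D ∉ Util) (hchild : ∀ u ∈ Util, ∀ v, ¬ E u v) (u : V) : SCIM V where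
  Edge := E
  acyclic := hac
  D := D
  Util := Util
  utilNotD := hD
  utilNoChild := hchild
  Dom := fun _ => Prop
  domFin := fun _ => inferInstance
  domNE := fun _ => inferInstance
  utilReal := fun w b => if w = u ∧ b then 1 else 0
  ExoDom := fun _ => Unit
  exoFin := fun _ => inferInstance
  exoNE := fun _ => inferInstance
  f := fun v a _ => ∀ p, E p v → a p
  localDep := fun v a a' _ h => forall_congr fun p => forall_congr fun hp => h p hp ▸ rfl
  P := fun _ _ => 1
  Pnonneg := fun _ _ => zero_le_one
  Psum := fun _ => show ∑ _e ∈ (Finset.univ : Finset Unit), (1 : ℝ) = 1 by simp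

namespace conjunctionModel

variable {E : V → V → Prop} {hac : Acyclic E} {D : V} {Util : Finset V} {hD : D ∉ Util}
  {hchild : ∀ u ∈ Util, ∀ v, ¬ E u v} {u : V}

local notation "𝓜" => conjunctionModel E hac D Util hD hchild u

def noise : ∀ v, (𝓜).ExoDom v := fun _ => ()

lemma eq_noise (ε : ∀ v, (𝓜).ExoDom v) : ε = noise := rfl

lemma sum_exoElems_eq (F : (∀ v, (𝓜).ExoDom v) → ℝ) : ∑ ε ∈ (𝓜).exoElems, F ε = F noise :=
  Finset.sum_eq_single_of_mem noise ((𝓜).mem_exoElems _) fun ε _ hε => absurd (eq_noise ε) hε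

lemma pjoint_eq_one (ε : ∀ v, (𝓜).ExoDom v) : (𝓜).Pjoint ε = 1 :=
  Finset.prod_const_one

lemma prEv_eq_one {Ev : (∀ v, (𝓜).ExoDom v) → Prop} (h : Ev noise) : (𝓜).PrEv Ev = 1 := by
  rw [SCIM.PrEv, sum_exoElems_eq, if_pos h, pjoint_eq_one]

lemma condExp_eq {Ev : (∀ v, (𝓜).ExoDom v) → Prop} (h : Ev noise)
    (F : (∀ v, (𝓜).ExoDom v) → ℝ) : (𝓜).condExp F Ev = F noise := by
  rw [SCIM.condExp, sum_exoElems_eq, if_pos h, pjoint_eq_one, prEv_eq_one h, one_mul, div_one]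

lemma totalU_eq (hu : u ∈ Util) (a : V → Prop) : (𝓜).TotalU a = if a u then 1 else 0 :=
  (Finset.sum_eq_single_of_mem u hu fun _ _ hwu => if_neg fun h => hwu h.1).trans
    (if_congr (and_iff_right rfl) rfl rfl)

lemma sol_gpol_of_ne {π : (𝓜).Policy} (hπ : (𝓜).IsPolicy π) (ε : ∀ v, (𝓜).ExoDom v) {v : V}
    (hv : v ≠ D) :
    (𝓜).sol ((𝓜).gpol π) ε v = ∀ p, E p v → (𝓜).sol ((𝓜).gpol π) ε p :=
  SCIM.sol_apply_of_eq_f hπ.isLocal_gpol ε (SCIM.gpol_of_ne hv)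

lemma sol_gpol_of_not_reflTransGen {π : (𝓜).Policy} (hπ : (𝓜).IsPolicy π)
    (ε : ∀ v, (𝓜).ExoDom v) {v : V} (hv : ¬ ReflTransGen E D v) : (𝓜).sol ((𝓜).gpol π) ε v :=
  holds_of_eq_forall_parents hac.wellFounded_transGen (T := {D})
    (fun _ hw => sol_gpol_of_ne hπ ε hw) v fun _ ht hDv => absurd (ht ▸ hDv) hv

lemma sol_gpol_of_forall {π : (𝓜).Policy} (hπ : (𝓜).IsPolicy π) (htrue : ∀ a e, π a e)
    (ε : ∀ v, (𝓜).ExoDom v) (v : V) : (𝓜).sol ((𝓜).gpol π) ε v :=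
  holds_of_eq_forall_parents hac.wellFounded_transGen (T := {D})
    (fun _ hw => sol_gpol_of_ne hπ ε hw) v fun t ht _ => by
      have hsolD := SCIM.sol_solves hπ.isLocal_gpol ε (𝓜).D
      rw [SCIM.gpol_self] at hsolD
      exact ht ▸ hsolD.mpr (htrue _ _)

lemma sol_gpol_of_isOptimal (hu : u ∈ Util) {π : (𝓜).Policy} (hπ : (𝓜).IsOptimal π) :
    (𝓜).sol ((𝓜).gpol π) noise u := by
  have hEU : ∀ π', (𝓜).EU π' = (𝓜).TotalU ((𝓜).sol ((𝓜).gpol π') noise) := fun π' => by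
    rw [SCIM.EU, SCIM.EUg, sum_exoElems_eq, pjoint_eq_one, one_mul]
  let πtrue : (𝓜).Policy := fun _ _ => True
  have hπtrue : (𝓜).IsPolicy πtrue := fun _ _ _ _ => rfl
  have hle := hπ.2 πtrue hπtrue
  rw [hEU, hEU, totalU_eq hu ((𝓜).sol ((𝓜).gpol πtrue) noise),
    totalU_eq hu ((𝓜).sol ((𝓜).gpol π) noise),
    if_pos (sol_gpol_of_forall hπtrue (fun _ _ => trivial) _ u)] at hle
  by_contra hne
  rw [if_neg hne] at hle
  norm_num at hle

/-- `D ⇝ x` keeps the decision off every path out of `x`, so all nodes strictly downstream of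
`x` are conjunction gates. -/
lemma not_response_false {π : (𝓜).Policy} (hπ : (𝓜).IsPolicy π) (ε : ∀ v, (𝓜).ExoDom v)
    {x v : V} (hDx : ReflTransGen E D x) (hxv : ReflTransGen E x v) :
    ¬ (𝓜).response π x False ε v := by
  have hloc := hπ.isLocal_gpol.doSet {x} (Function.update (𝓜).dflt x False)
  refine not_of_eq_forall_parents (s := (𝓜).response π x False ε) ?_ hxv fun w hxw => ?_
  · have hx := SCIM.sol_solves hloc ε x
    rw [SCIM.doSet_of_mem (Set.mem_singleton x)] at hx
    exact fun h => (Function.update_self x _ (𝓜).dflt).mp (hx.mp h)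
  · have hwx : w ∉ ({x} : Set V) := fun h => hac x (h ▸ hxw)
    have hwD : w ≠ D := fun h => hac.not_transGen_of_reflTransGen hDx (h ▸ hxw)
    exact SCIM.sol_apply_of_eq_f hloc ε
      ((SCIM.doSet_of_not_mem hwx).trans (SCIM.gpol_of_ne hwD))

lemma hasICI (hu : u ∈ Util) {X : V} (hDX : ReflTransGen E D X) (hXu : ReflTransGen E X u) :
    (𝓜).HasICI X := by
  have hctx : ∀ π, (𝓜).IsPolicy π → (𝓜).CtxEvent π (fun _ => True) noise := fun π hπ p hpD =>
    eq_true (sol_gpol_of_not_reflTransGen hπ _ fun hDp => hac D (TransGen.tail' hDp hpD))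
  refine ⟨fun _ => True, fun π hπ => ⟨?_, False, ?_⟩⟩
  · rw [prEv_eq_one (hctx π hπ.1)]
    exact one_pos
  have hX : (𝓜).response π D False noise X = False :=
    eq_false (not_response_false hπ.1 _ .refl hDX)
  have hN : (𝓜).nestedSol π X False noise = (𝓜).response π X False noise :=
    congrArg (fun x => (𝓜).response π X x noise) hX
  rw [condExp_eq (hctx π hπ.1), condExp_eq (hctx π hπ.1), hN,
    totalU_eq hu ((𝓜).response π X False noise), totalU_eq hu ((𝓜).sol ((𝓜).gpol π) noise),
    if_pos (sol_gpol_of_isOptimal hu hπ), if_neg (not_response_false hπ.1 _ hDX hXu)]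
  exact zero_ne_one

end conjunctionModel

/-- instrumental control incentive criterion: a single-decision
CID (given by edges `E`, decision `D`, utility nodes `Util`) admits an instrumental
control incentive on `X` iff there is a directed path `D ⇝ X ⇝ U` through `X` to
some utility node `U`. -/
theorem ici_criterion {V : Type} [Fintype V] [DecidableEq V]
    (E : V → V → Prop) (hac : Acyclic E) (D : V) (Util : Finset V)
    (hD : D ∉ Util) (hchild : ∀ u ∈ Util, ∀ v, ¬ E u v) (X : V) :
    (∃ M : SCIM V, M.Edge = E ∧ M.D = D ∧ M.Util = Util ∧ M.HasICI X) ↔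
    (Relation.ReflTransGen E D X ∧ ∃ u ∈ Util, Relation.ReflTransGen E X u) := by
  constructor
  · rintro ⟨M, rfl, rfl, rfl, hICI⟩
    exact hICI.reflTransGen
  · rintro ⟨hDX, u, hu, hXu⟩
    exact ⟨conjunctionModel E hac D Util hD hchild u, rfl, rfl, rfl,
      conjunctionModel.hasICI hu hDX hXu⟩
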